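/- arXiv:1112.4230 — 2 statements merged into one kernel-verified Lean document; each statement's English description precedes it below -/
import Mathlib

section
/- Let x_1, …, x_m, u, α, t be nonzero elements of a field, and define the interpolation polynomials of column type e_r(x;α|t) = Σ_{1 ≤ i_1 < ⋯ < i_r ≤ m} ∏_{s=1}^{r} e(x_{i_s}; t^{i_s - s} α) for 0 ≤ r ≤ m, where e(z;w) = z + z^{-1} - w - w^{-1}. Then Σ_{r=0}^{m} (-1)^r e_r(x;α|t) · e(u;α)_{t, m-r} = ∏_{i=1}^{m} e(u; x_i), where e(u;α)_{t,k} = ∏_{j=0}^{k-1} e(u; t^j α). -/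
/-- The BC-type building block `e(z;w) = z + z⁻¹ - w - w⁻¹`. -/
noncomputable def eBC {K : Type*} [Field K] (z w : K) : K := z + z⁻¹ - w - w⁻¹

/-- The BC-type `q`-shifted factorial `e(z;w)_{q,l} = ∏_{i=0}^{l-1} e(z; q^i w)`. -/
noncomputable def eBCfac {K : Type*} [Field K] (q z w : K) (l : ℕ) : K :=
  ∏ i ∈ Finset.range l, eBC z (q ^ i * w)

/-- The finset of strictly increasing functions `Fin r → Fin m`,
encoding the index sets `1 ≤ i_1 < ⋯ < i_r ≤ m`. -/
def smFuns (r m : ℕ) : Finset (Fin r → Fin m) :=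
  Finset.univ.filter fun f => ∀ i j : Fin r, i < j → f i < f j

/-- The column-type interpolation polynomial
`e_r(x;α|t) = Σ_{1 ≤ i_1 < ⋯ < i_r ≤ m} ∏_{s=1}^{r} e(x_{i_s}; t^{i_s - s} α)`. -/
noncomputable def eCol {K : Type*} [Field K] {m : ℕ} (x : Fin m → K) (α t : K) (r : ℕ) : K :=
  ∑ f ∈ smFuns r m, ∏ s : Fin r,
    eBC (x (f s)) (t ^ (((f s : ℕ) : ℤ) - ((s : ℕ) : ℤ)) * α)

/-! Induct on the number of variables. Sorting the index sets by whether they contain `m + 1`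
gives `e_r(x_1,…,x_{m+1}) = e_r(x_1,…,x_m) + e_{r-1}(x_1,…,x_m) e(x_{m+1}; t^{m+1-r} α)`. Because
`e(u; w) - e(x_{m+1}; w) = e(u; x_{m+1})` for every `w`, the second term combines with the last
factor `e(u; t^{m-r} α)` of `e(u;α)_{t,m+1-r}` to turn the sum for `m + 1` variables into the sum
for `m` variables times `e(u; x_{m+1})`. -/

open Finset

theorem mem_smFuns {r m : ℕ} {f : Fin r → Fin m} : f ∈ smFuns r m ↔ StrictMono f := by
  simp [smFuns, StrictMono]

theorem smFuns_eq_empty_of_lt {r m : ℕ} (h : m < r) : smFuns r m = ∅ :=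
  eq_empty_of_forall_notMem fun f hf =>
    h.not_ge (Fin.le_of_injective f (mem_smFuns.mp hf).injective)

theorem Fin.strictMono_snoc_iff {α : Type*} [Preorder α] {n : ℕ} {f : Fin n → α} {a : α} :
    StrictMono (Fin.snoc f a : Fin (n + 1) → α) ↔ StrictMono f ∧ ∀ i, f i < a := by
  simp [← Fin.insertNth_last', Fin.strictMono_insertNth_iff, Fin.castSucc_lt_last]

theorem Fin.strictMono_castSucc_comp_iff {r m : ℕ} {g : Fin r → Fin m} :
    StrictMono (Fin.castSucc ∘ g) ↔ StrictMono g :=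
  ⟨fun h _ _ hab => Fin.castSucc_lt_castSucc_iff.mp (h hab), Fin.strictMono_castSucc.comp⟩

theorem Fin.exists_castSucc_comp_eq {r m : ℕ} {f : Fin r → Fin (m + 1)}
    (hf : ∀ s, f s ≠ Fin.last m) : ∃ g : Fin r → Fin m, Fin.castSucc ∘ g = f :=
  ⟨fun s => (f s).castPred (hf s), funext fun _ => Fin.castSucc_castPred _ _⟩

section SmFunsSucc

variable {M : Type*} [AddCommMonoid M] {k m : ℕ} (φ : (Fin (k + 1) → Fin (m + 1)) → M)

theorem sum_smFuns_filter_last_ne :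
    ∑ f ∈ (smFuns (k + 1) (m + 1)).filter (fun f => f (Fin.last k) ≠ Fin.last m), φ f =
      ∑ g ∈ smFuns (k + 1) m, φ (Fin.castSucc ∘ g) := by
  symm
  refine sum_nbij (Fin.castSucc ∘ ·) (fun g hg => ?_) (Fin.castSucc_injective m).comp_left.injOn
    (fun f hf => ?_) fun _ _ => rfl
  · simp only [mem_filter, mem_smFuns, Fin.strictMono_castSucc_comp_iff] at hg ⊢
    exact ⟨hg, (Fin.castSucc_lt_last _).ne⟩
  · simp only [coe_filter, mem_smFuns, Set.mem_ofPred_eq] at hf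
    have hlt : ∀ s, f s ≠ Fin.last m := fun s =>
      ((hf.1.monotone (Fin.le_last s)).trans_lt (Fin.lt_last_iff_ne_last.mpr hf.2)).ne
    obtain ⟨g, rfl⟩ := Fin.exists_castSucc_comp_eq hlt
    exact ⟨g, by simpa [mem_smFuns, Fin.strictMono_castSucc_comp_iff] using hf.1, rfl⟩

theorem sum_smFuns_filter_last_eq :
    ∑ f ∈ (smFuns (k + 1) (m + 1)).filter (fun f => f (Fin.last k) = Fin.last m), φ f =
      ∑ g ∈ smFuns k m, φ (Fin.snoc (Fin.castSucc ∘ g) (Fin.last m)) := by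
  symm
  refine sum_nbij (fun g => Fin.snoc (Fin.castSucc ∘ g) (Fin.last m)) (fun g hg => ?_)
    (fun g₁ _ g₂ _ h => ?_) (fun f hf => ?_) fun _ _ => rfl
  · simp only [mem_filter, mem_smFuns, Fin.strictMono_snoc_iff, Fin.strictMono_castSucc_comp_iff,
      Fin.snoc_last, and_true] at hg ⊢
    exact ⟨hg, fun s => Fin.castSucc_lt_last _⟩
  · have h_init := congrArg Fin.init h
    simp only [Fin.init_snoc] at h_init
    exact (Fin.castSucc_injective m).comp_left h_init
  · simp only [coe_filter, mem_smFuns, Set.mem_ofPred_eq] at hf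
    have hsnoc := hf.1
    rw [← Fin.snoc_init_self f, Fin.strictMono_snoc_iff, hf.2] at hsnoc
    obtain ⟨g, hg⟩ := Fin.exists_castSucc_comp_eq fun s => (hsnoc.2 s).ne
    refine ⟨g, ?_, show Fin.snoc _ _ = f by rw [hg, ← hf.2, Fin.snoc_init_self]⟩
    rw [mem_coe, mem_smFuns, ← Fin.strictMono_castSucc_comp_iff, hg]
    exact hsnoc.1

end SmFunsSucc

section GeneratingFunction

variable {K : Type*} [Field K]

theorem eBC_sub_eBC (u y w : K) : eBC u w - eBC y w = eBC u y := by
  unfold eBC; ring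

theorem eBCfac_succ (q z w : K) (l : ℕ) :
    eBCfac q z w (l + 1) = eBCfac q z w l * eBC z (q ^ l * w) :=
  prod_range_succ _ _

theorem eCol_zero {m : ℕ} (x : Fin m → K) (α t : K) : eCol x α t 0 = 1 := by
  simp [eCol, smFuns]

theorem eCol_eq_zero_of_lt {m r : ℕ} (x : Fin m → K) (α t : K) (h : m < r) :
    eCol x α t r = 0 := by
  rw [eCol, smFuns_eq_empty_of_lt h, sum_empty]

theorem eCol_succ {m : ℕ} (x : Fin (m + 1) → K) (α t : K) (k : ℕ) :
    eCol x α t (k + 1) = eCol (x ∘ Fin.castSucc) α t (k + 1) +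
      eCol (x ∘ Fin.castSucc) α t k * eBC (x (Fin.last m)) (t ^ (m - k) * α) := by
  rw [eCol, ← sum_filter_add_sum_filter_not _ (fun f => f (Fin.last k) = Fin.last m),
    sum_smFuns_filter_last_eq, sum_smFuns_filter_last_ne, add_comm]
  congr 1
  rw [eCol, sum_mul]
  refine sum_congr rfl fun g hg => ?_
  have hk : k ≤ m := Fin.le_of_injective g (mem_smFuns.mp hg).injective
  simp [Fin.prod_univ_castSucc, ← Nat.cast_sub hk]

theorem sum_eCol_mul_eBCfac_succ {m : ℕ} (x : Fin (m + 1) → K) (u α t : K) :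
    ∑ r ∈ range (m + 2), (-1) ^ r * eCol x α t r * eBCfac t u α (m + 1 - r) =
      (∑ r ∈ range (m + 1), (-1) ^ r * eCol (x ∘ Fin.castSucc) α t r * eBCfac t u α (m - r)) *
        eBC u (x (Fin.last m)) := by
  set E := eCol (x ∘ Fin.castSucc) α t
  set F := eBCfac t u α
  set y := x (Fin.last m)
  have h_split (r : ℕ) : (-1) ^ (r + 1) * eCol x α t (r + 1) * F (m - r) =
      (-1) ^ (r + 1) * E (r + 1) * F (m - r) -
        (-1) ^ r * E r * F (m - r) * eBC y (t ^ (m - r) * α) := by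
    rw [eCol_succ]; ring
  have h_shift : ∑ r ∈ range (m + 2), (-1) ^ r * E r * F (m + 1 - r) =
      ∑ r ∈ range (m + 1), (-1) ^ r * E r * F (m - r) * eBC u (t ^ (m - r) * α) := by
    have h_top : E (m + 1) = 0 := eCol_eq_zero_of_lt _ _ _ (Nat.lt_succ_self m)
    rw [sum_range_succ, h_top, mul_zero, zero_mul, add_zero]
    refine sum_congr rfl fun r hr => ?_
    rw [Nat.sub_add_comm (mem_range_succ_iff.mp hr)]
    simp only [F, eBCfac_succ, mul_assoc]
  calc ∑ r ∈ range (m + 2), (-1) ^ r * eCol x α t r * F (m + 1 - r)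
      = ∑ r ∈ range (m + 2), (-1) ^ r * E r * F (m + 1 - r) -
          ∑ r ∈ range (m + 1), (-1) ^ r * E r * F (m - r) * eBC y (t ^ (m - r) * α) := by
        rw [sum_range_succ', sum_range_succ' (fun r => (-1) ^ r * E r * F (m + 1 - r))]
        simp only [Nat.add_sub_add_right, h_split, sum_sub_distrib, eCol_zero, E]
        ring
    _ = ∑ r ∈ range (m + 1), (-1) ^ r * E r * F (m - r) *
          (eBC u (t ^ (m - r) * α) - eBC y (t ^ (m - r) * α)) := by
        rw [h_shift, ← sum_sub_distrib]
        simp only [mul_sub]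
    _ = _ := by simp only [eBC_sub_eBC, sum_mul]

end GeneratingFunction

theorem eCol_generating_function_general {K : Type*} [Field K] {m : ℕ}
    (x : Fin m → K) (u α t : K) :
    ∑ r ∈ Finset.range (m + 1), (-1) ^ r * eCol x α t r * eBCfac t u α (m - r) =
      ∏ i : Fin m, eBC u (x i) := by
  induction m with
  | zero => simp [eCol_zero, eBCfac]
  | succ m ih => rw [sum_eCol_mul_eBCfac_succ, ih, Fin.prod_univ_castSucc, Function.comp_def]

/-- Generating function identity:
`Σ_{r=0}^{m} (-1)^r e_r(x;α|t) · e(u;α)_{t, m-r} = ∏_{i=1}^{m} e(u; x_i)`. -/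
theorem eCol_generating_function {K : Type*} [Field K] {m : ℕ}
    (x : Fin m → K) (u α t : K)
    (hx : ∀ i, x i ≠ 0) (hu : u ≠ 0) (hα : α ≠ 0) (ht : t ≠ 0) :
    ∑ r ∈ Finset.range (m + 1), (-1) ^ r * eCol x α t r * eBCfac t u α (m - r) =
      ∏ i : Fin m, eBC u (x i) :=
  eCol_generating_function_general x u α t
end

section
/- Let m, n be natural numbers, λ a partition contained in the m × n rectangle (i.e., λ has at most m parts, each at most n), λ' its conjugate partition, and set λ*_k = m − λ'_{n+1−k} for 1 ≤ k ≤ n. Let Q, t, q, u be nonzero elements of a field such that all brackets below are nonzero. Then ∏_{k=1}^{n} e(t Q q^{n−k} t^{λ*_k − 1}; u) / e(Q q^{n−k}; u) = ∏_{(i,j)} e(t Q t^{m−i} q^{j−1}; u) / e(Q t^{m−i} q^{j−1}; u), where the product on the right runs over all cells (i,j) with 1 ≤ i ≤ m, 1 ≤ j ≤ n, and j > λ_i (i.e., over the complement of λ in the m × n rectangle), and e(z;w) := z + z^{-1} − w − w^{-1}. -/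
/-- The conjugate partition: `λ'_j = #{i : λ_i ≥ j}` (with `j ≥ 1`). -/
def conjPart {m : ℕ} (lam : Fin m → ℕ) (j : ℕ) : ℕ :=
  (Finset.univ.filter fun i : Fin m => j ≤ lam i).card

/-- The complementary-conjugate partition `λ*_k = m − λ'_{n+1−k}` (1-based `k`),
written here with 0-based `k : Fin n`, so `λ*_{k+1} = m − λ'_{n−k}`. -/
def lamStar {m : ℕ} (n : ℕ) (lam : Fin m → ℕ) (k : Fin n) : ℕ :=
  m - conjPart lam (n - (k : ℕ))

open Finset

theorem Finset.prod_range_div_of_ne_zero {G₀ : Type*} [CommGroupWithZero G₀] (f : ℕ → G₀)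
    {n : ℕ} (h0 : f 0 ≠ 0) (hf : ∀ s < n, f s ≠ 0) :
    ∏ s ∈ range n, f (s + 1) / f s = f n / f 0 := by
  induction n with
  | zero => simp [h0]
  | succ n ih =>
    rw [prod_range_succ, ih fun s hs => hf s (by omega),
      div_mul_div_cancel₀' (hf n n.lt_add_one)]

theorem Fin.prod_filter_le_div_of_ne_zero {G₀ : Type*} [CommGroupWithZero G₀] (f : ℕ → G₀)
    (m c : ℕ) (h0 : f 0 ≠ 0) (hf : ∀ s < m, f s ≠ 0) :
    ∏ i ∈ univ.filter (fun i : Fin m => c ≤ (i : ℕ)), f (m - i) / f (m - 1 - i) =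
      f (m - c) / f 0 := by
  rw [← prod_range_div_of_ne_zero f h0 fun s hs => hf s (by omega)]
  refine prod_bij' (fun i _ => m - 1 - i)
    (fun s hs => ⟨m - 1 - s, by rw [mem_range] at hs; omega⟩) ?_ ?_ ?_ ?_ ?_ <;>
    intro x hx <;> simp only [mem_filter, mem_univ, true_and, mem_range] at hx
  · simp only [mem_range]; omega
  · simp only [mem_filter, mem_univ, true_and]; omega
  · ext; simp only; omega
  · simp only; omega
  · congr 2; omega

section Partition

variable {m : ℕ} {lam : Fin m → ℕ}

theorem le_apply_iff_lt_conjPart (hanti : Antitone lam) (v : ℕ) (i : Fin m) :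
    v ≤ lam i ↔ (i : ℕ) < conjPart lam v := by
  constructor
  · intro hi
    have hsub : Iic i ⊆ univ.filter (fun x => v ≤ lam x) := fun x hx =>
      mem_filter.2 ⟨mem_univ x, hi.trans (hanti (mem_Iic.1 hx))⟩
    simpa [conjPart, Nat.succ_le_iff] using card_le_card hsub
  · contrapose!
    intro hi
    have hsub : univ.filter (fun x => v ≤ lam x) ⊆ Iio i := fun x hx =>
      mem_Iio.2 (lt_of_not_ge fun hix => (hanti hix).not_gt (hi.trans_le (mem_filter.1 hx).2))
    simpa [conjPart] using card_le_card hsub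

theorem apply_le_iff_conjPart_succ_le (hanti : Antitone lam) (j : ℕ) (i : Fin m) :
    lam i ≤ j ↔ conjPart lam (j + 1) ≤ i := by
  have := le_apply_iff_lt_conjPart hanti (j + 1) i
  omega

theorem lamStar_rev (n : ℕ) (j : Fin n) :
    lamStar n lam j.rev = m - conjPart lam (j + 1) := by
  rw [lamStar, Fin.val_rev]
  congr 2
  omega

end Partition

theorem dual_cauchy_eigenvalue_general {K : Type*} [Field K] (m n : ℕ)
    (lam : Fin m → ℕ) (hanti : Antitone lam)
    (Q t q u : K) (ht : t ≠ 0)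
    (hden1 : ∀ k : Fin n, eBC (Q * q ^ (n - 1 - (k : ℕ))) u ≠ 0)
    (hden2 : ∀ (i : Fin m) (j : Fin n),
      eBC (Q * t ^ (m - 1 - (i : ℕ)) * q ^ (j : ℕ)) u ≠ 0) :
    (∏ k : Fin n,
        eBC (t * Q * q ^ (n - 1 - (k : ℕ)) * t ^ ((lamStar n lam k : ℤ) - 1)) u /
          eBC (Q * q ^ (n - 1 - (k : ℕ))) u) =
      ∏ i : Fin m, ∏ j ∈ Finset.univ.filter (fun j : Fin n => lam i ≤ (j : ℕ)),
        eBC (t * Q * t ^ (m - 1 - (i : ℕ)) * q ^ (j : ℕ)) u /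
          eBC (Q * t ^ (m - 1 - (i : ℕ)) * q ^ (j : ℕ)) u := by
  rw [prod_comm' (t' := univ)
      (s' := fun j : Fin n => univ.filter fun i : Fin m => conjPart lam (j + 1) ≤ (i : ℕ))
      fun i j => by simp [apply_le_iff_conjPart_succ_le hanti],
    ← Equiv.prod_comp Fin.revPerm]
  refine prod_congr rfl fun j _ => ?_
  set f : ℕ → K := fun s => eBC (Q * t ^ s * q ^ (j : ℕ)) u
  have hrev : n - 1 - (j.rev : ℕ) = j := by rw [Fin.val_rev]; omega
  have h0 : f 0 ≠ 0 := by simpa only [f, hrev, pow_zero, mul_one] using hden1 j.rev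
  have hf : ∀ s < m, f s ≠ 0 := fun s hs => by
    simpa [f, show m - 1 - (m - 1 - s) = s by omega] using hden2 ⟨m - 1 - s, by omega⟩ j
  have hnum (k : ℕ) :
      t * Q * q ^ (j : ℕ) * t ^ ((k : ℤ) - 1) = Q * t ^ k * q ^ (j : ℕ) := by
    rw [zpow_sub_one₀ ht, zpow_natCast]
    field_simp
  have hfactor (i : Fin m) :
      t * Q * t ^ (m - 1 - (i : ℕ)) * q ^ (j : ℕ) = Q * t ^ (m - i) * q ^ (j : ℕ) := by
    rw [show m - (i : ℕ) = m - 1 - i + 1 by omega, pow_succ]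
    ring
  simp only [Fin.revPerm_apply, hrev, lamStar_rev, hnum, hfactor]
  simpa [f] using (Fin.prod_filter_le_div_of_ne_zero f m _ h0 hf).symm

/-- Eigenvalue identity underlying the kernel identity of dual Cauchy type:
`∏_{k=1}^{n} e(tQ q^{n−k} t^{λ*_k − 1}; u) / e(Q q^{n−k}; u)
  = ∏_{(i,j) ∈ (n^m) ∖ λ} e(tQ t^{m−i} q^{j−1}; u) / e(Q t^{m−i} q^{j−1}; u)`. -/
theorem dual_cauchy_eigenvalue {K : Type*} [Field K] (m n : ℕ)
    (lam : Fin m → ℕ) (hanti : Antitone lam) (hle : ∀ i, lam i ≤ n)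
    (Q t q u : K) (hQ : Q ≠ 0) (ht : t ≠ 0) (hq : q ≠ 0) (hu : u ≠ 0)
    (hden1 : ∀ k : Fin n, eBC (Q * q ^ (n - 1 - (k : ℕ))) u ≠ 0)
    (hden2 : ∀ (i : Fin m) (j : Fin n),
      eBC (Q * t ^ (m - 1 - (i : ℕ)) * q ^ (j : ℕ)) u ≠ 0) :
    (∏ k : Fin n,
        eBC (t * Q * q ^ (n - 1 - (k : ℕ)) * t ^ ((lamStar n lam k : ℤ) - 1)) u /
          eBC (Q * q ^ (n - 1 - (k : ℕ))) u) =
      ∏ i : Fin m, ∏ j ∈ Finset.univ.filter (fun j : Fin n => lam i ≤ (j : ℕ)),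
        eBC (t * Q * t ^ (m - 1 - (i : ℕ)) * q ^ (j : ℕ)) u /
          eBC (Q * t ^ (m - 1 - (i : ℕ)) * q ^ (j : ℕ)) u :=
  dual_cauchy_eigenvalue_general m n lam hanti Q t q u ht hden1 hden2
end
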